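/- arXiv:2106.05685 — 3 statements merged into one kernel-verified Lean document; each statement's English description precedes it below -/
import Mathlib

section
/- Let p ≥ 2 and let A be the elementary abelian 2-group (Z_2)^p, of order k = 2^p. Then the path graph P_n is A-cordial for every integer n with 1 ≤ n ≤ 2^p − 1. -/
/-- The edge labeling induced by a vertex labeling `c`: edge `{u, v}` gets label `c u + c v`. -/
def edgeLabel {V A : Type*} [AddCommMonoid A] (c : V → A) : Sym2 V → A :=
  Sym2.lift ⟨fun u v => c u + c v, fun _ _ => add_comm _ _⟩

/-- `c` is an `A`-cordial labeling of `G`: the vertex-label classes differ in size by at most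
one, and the induced edge-label classes differ in size by at most one. -/
def IsCordialLabeling {V A : Type*} [AddCommMonoid A] (G : SimpleGraph V) (c : V → A) : Prop :=
  (∀ a b : A, {v : V | c v = a}.ncard ≤ {v : V | c v = b}.ncard + 1) ∧
  (∀ a b : A, {e ∈ G.edgeSet | edgeLabel c e = a}.ncard ≤
      {e ∈ G.edgeSet | edgeLabel c e = b}.ncard + 1)

/-- A graph `G` is `A`-cordial if it admits an `A`-cordial labeling. -/
def IsCordial (A : Type*) [AddCommMonoid A] {V : Type*} (G : SimpleGraph V) : Prop :=
  ∃ c : V → A, IsCordialLabeling G c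

open SimpleGraph

lemma edgeLabel_mk {V A : Type*} [AddCommMonoid A] (c : V → A) (u v : V) :
    edgeLabel c s(u, v) = c u + c v := rfl

/-- If the vertex labeling is injective and the induced edge labeling is injective on the
edge set, then the labeling is cordial. -/
lemma isCordialLabeling_of_injective {V A : Type*} [AddCommMonoid A] [Finite V]
    (G : SimpleGraph V) (c : V → A) (hc : Function.Injective c)
    (he : Set.InjOn (edgeLabel c) G.edgeSet) : IsCordialLabeling G c := by
  constructor
  · intro a b
    have : {v : V | c v = a}.ncard ≤ 1 := by
      rw [Set.ncard_le_one_iff (Set.toFinite _)]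
      intro x y hx hy
      exact hc (hx.trans hy.symm)
    omega
  · intro a b
    have : {e ∈ G.edgeSet | edgeLabel c e = a}.ncard ≤ 1 := by
      rw [Set.ncard_le_one_iff (Set.toFinite _)]
      rintro x y ⟨hx, hx2⟩ ⟨hy, hy2⟩
      exact he hx hy (hx2.trans hy2.symm)
    omega

/-- Cordiality transfers along additive equivalences of the label group. -/
lemma isCordialLabeling_comp {V A B : Type*} [AddCommMonoid A] [AddCommMonoid B]
    (G : SimpleGraph V) (c : V → A) (φ : A ≃+ B) (h : IsCordialLabeling G c) :
    IsCordialLabeling G (⇑φ ∘ c) := by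
  have hedge : ∀ e : Sym2 V, edgeLabel (⇑φ ∘ c) e = φ (edgeLabel c e) := by
    intro e
    induction e using Sym2.ind with
    | _ u v => simp [edgeLabel_mk, map_add]
  constructor
  · intro a b
    have h1 : ∀ a : B, {v : V | (⇑φ ∘ c) v = a} = {v : V | c v = φ.symm a} := by
      intro a; ext v
      simp only [Set.mem_setOf_eq, Function.comp_apply]
      constructor
      · intro h; rw [← h]; simp
      · intro h; rw [h]; simp
    rw [h1, h1]
    exact h.1 _ _
  · intro a b
    have h1 : ∀ a : B, {e ∈ G.edgeSet | edgeLabel (⇑φ ∘ c) e = a} =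
        {e ∈ G.edgeSet | edgeLabel c e = φ.symm a} := by
      intro a; ext e
      simp only [Set.mem_setOf_eq, hedge, and_congr_right_iff]
      intro _
      constructor
      · intro h; rw [← h]; simp
      · intro h; rw [h]; simp
    rw [h1, h1]
    exact h.2 _ _

/-- For the elementary abelian `2`-group `(ℤ₂)^p` with `p ≥ 2`, the path `Pₙ` is
`(ℤ₂)^p`-cordial for every `n` with `1 ≤ n ≤ 2^p - 1`. -/
theorem path_cordial_elementary_abelian_small (p : ℕ) (hp : 2 ≤ p) (n : ℕ)
    (hn1 : 1 ≤ n) (hn2 : n ≤ 2 ^ p - 1) :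
    IsCordial (Fin p → ZMod 2) (pathGraph n) := by
  have hp0 : p ≠ 0 := by omega
  set K := GaloisField 2 p with hK
  -- cardinality facts
  have hcard : Nat.card K = 2 ^ p := GaloisField.card 2 p hp0
  have hcardu : Nat.card Kˣ = 2 ^ p - 1 := by
    rw [Nat.card_units, hcard]
  -- a multiplicative generator
  obtain ⟨g, hg⟩ := IsCyclic.exists_generator (α := Kˣ)
  have horder : orderOf g = 2 ^ p - 1 := by
    rw [orderOf_eq_card_of_forall_mem_zpowers hg, hcardu]
  have h3 : 3 ≤ 2 ^ p - 1 := by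
    have : 2 ^ 2 ≤ 2 ^ p := Nat.pow_le_pow_right (by norm_num) hp
    omega
  -- the generator is not 1
  have hg1 : (g : K) ≠ 1 := by
    intro h
    have : g = 1 := Units.ext (by simpa using h)
    rw [this, orderOf_one] at horder
    omega
  have hgne : (1 : K) + (g : K) ≠ 0 := by
    intro h
    have : (g : K) = -1 := by linear_combination h
    have : (g : K) = 1 := by
      rw [this]
      have : (2 : K) = 0 := by
        have := (CharP.cast_eq_zero_iff K 2 2).mpr dvd_rfl
        simpa using this
      linear_combination -this
    exact hg1 this
  -- powers of g are injective below the order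
  have hpow : ∀ i j : ℕ, i < 2 ^ p - 1 → j < 2 ^ p - 1 → (g : K) ^ i = (g : K) ^ j → i = j := by
    intro i j hi hj hij
    have : g ^ i = g ^ j := Units.ext (by push_cast; exact hij)
    exact pow_injOn_Iio_orderOf (by rw [Set.mem_Iio, horder]; exact hi)
      (by rw [Set.mem_Iio, horder]; exact hj) this
  -- the vertex labeling in K
  set c : Fin n → K := fun i => (g : K) ^ (i : ℕ) with hc
  have hcinj : Function.Injective c := by
    intro i j hij
    exact Fin.ext (hpow _ _ (lt_of_lt_of_le i.isLt hn2) (lt_of_lt_of_le j.isLt hn2) hij)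
  -- edge labels
  have hedge : ∀ u v : Fin n, (pathGraph n).Adj u v →
      edgeLabel c s(u, v) = (g : K) ^ (min (u : ℕ) (v : ℕ)) * (1 + (g : K)) := by
    intro u v huv
    rw [pathGraph_adj] at huv
    rcases huv with h | h
    · have hmin : min (u : ℕ) (v : ℕ) = (u : ℕ) := by omega
      rw [edgeLabel_mk, hmin, hc]
      simp only
      rw [← h, pow_succ]
      ring
    · have hmin : min (u : ℕ) (v : ℕ) = (v : ℕ) := by omega
      rw [edgeLabel_mk, hmin, hc]
      simp only
      rw [← h, pow_succ]
      ring
  have heinj : Set.InjOn (edgeLabel c) (pathGraph n).edgeSet := by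
    intro e1 he1 e2 he2 h12
    induction e1 using Sym2.ind with
    | _ u v =>
      induction e2 using Sym2.ind with
      | _ u' v' =>
        rw [SimpleGraph.mem_edgeSet] at he1 he2
        rw [hedge u v he1, hedge u' v' he2] at h12
        have h12' : (g : K) ^ (min (u : ℕ) (v : ℕ)) = (g : K) ^ (min (u' : ℕ) (v' : ℕ)) :=
          mul_right_cancel₀ hgne h12
        have hmin : min (u : ℕ) (v : ℕ) = min (u' : ℕ) (v' : ℕ) := by
          apply hpow
          · have := u.isLt; have := v.isLt; omega
          · have := u'.isLt; have := v'.isLt; omega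
          · exact h12'
        rw [pathGraph_adj] at he1 he2
        have : ((u : ℕ) = (u' : ℕ) ∧ (v : ℕ) = (v' : ℕ)) ∨
            ((u : ℕ) = (v' : ℕ) ∧ (v : ℕ) = (u' : ℕ)) := by omega
        rcases this with ⟨h1, h2⟩ | ⟨h1, h2⟩
        · rw [Fin.ext h1, Fin.ext h2]
        · rw [Fin.ext h1, Fin.ext h2, Sym2.eq_swap]
  -- transfer to (Fin p → ZMod 2)
  have hfr : Module.finrank (ZMod 2) K = p := GaloisField.finrank 2 hp0
  let b := (Module.finBasis (ZMod 2) K).reindex (finCongr hfr)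
  let φ : K ≃+ (Fin p → ZMod 2) := b.equivFun.toAddEquiv
  exact ⟨⇑φ ∘ c, isCordialLabeling_comp _ c φ
    (isCordialLabeling_of_injective _ c hcinj heinj)⟩
end

section
/- Let A be a finite abelian group of odd order k ≥ 3. Then for every positive integer m and every integer r with 0 ≤ r ≤ k − 1, the cycle graph C_{mk+r} is A-cordial. Equivalently, every cycle C_n with n ≥ k is A-cordial. -/
open SimpleGraph

/-!
An ordering `p 0, …, p (k - 1)` of `A` is harmonious if the cyclically consecutive sums
`p t + p (t + 1)` also run through `A` exactly once. Finite abelian groups of odd order have one: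
given a harmonious ordering `γ` of `A ⧸ ⟨g⟩` (period `c`), go through it `ord g` times, adding
`q • g` to the representatives in round `q`. Consecutive sums of the lift reduce to those of `γ`
and differ by `(2 q + ε) • g`, where `ε` depends only on `t mod c`; since `2` is invertible modulo
the odd order of `g`, they are again distinct.

On `C_{mk+r}`, go `m` times around `A` in this order and double the first `r` labels. The vertex
labels are then `m` copies of `A` plus the distinct `p 0, …, p (r - 1)`, and the edge labels are
`m` copies of `A` plus the distinct `2 • p 0, …, 2 • p (r - 1)`.
-/

def InjectiveMod {α : Type*} (k : ℕ) (f : ℕ → α) : Prop :=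
  ∀ s t, f s = f t ↔ s ≡ t [MOD k]

def IsHarmoniousOrdering {A : Type*} [Add A] (k : ℕ) (p : ℕ → A) : Prop :=
  InjectiveMod k p ∧ InjectiveMod k fun t => p t + p (t + 1)

theorem Nat.modEq_mul_iff_modEq_and_div_modEq {c h s t : ℕ} :
    s ≡ t [MOD c * h] ↔ s ≡ t [MOD c] ∧ s / c ≡ t / c [MOD h] := by
  unfold Nat.ModEq
  rw [Nat.mod_mul, Nat.mod_mul]
  rcases Nat.eq_zero_or_pos c with rfl | hc
  · simp
  constructor
  · intro hst
    have hmod := congrArg (· % c) hst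
    simp only [Nat.add_mul_mod_self_left, Nat.mod_mod] at hmod
    refine ⟨hmod, ?_⟩
    rw [hmod] at hst
    exact Nat.eq_of_mul_eq_mul_left hc (Nat.add_left_cancel hst)
  · rintro ⟨h1, h2⟩
    rw [h1, h2]

theorem Nat.two_mul_add_modEq_iff {h a b e : ℕ} (hh : Odd h) :
    2 * a + e ≡ 2 * b + e [MOD h] ↔ a ≡ b [MOD h] :=
  ⟨fun H => (H.add_right_cancel' e).cancel_left_of_coprime (Nat.coprime_two_right.2 hh),
    fun H => (H.mul_left 2).add_right e⟩

theorem injectiveMod_mul_of_div_modEq {α : Type*} {f : ℕ → α} {c h : ℕ}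
    (hc : ∀ s t, f s = f t → s ≡ t [MOD c])
    (hh : ∀ s t, s ≡ t [MOD c] → (f s = f t ↔ s / c ≡ t / c [MOD h])) :
    InjectiveMod (c * h) f := fun s t => by
  rw [Nat.modEq_mul_iff_modEq_and_div_modEq]
  exact ⟨fun hst => ⟨hc s t hst, (hh s t (hc s t hst)).1 hst⟩, fun H => (hh s t H.1).2 H.2⟩

section lift

open QuotientAddGroup

noncomputable def liftOrdering {A : Type*} [AddCommGroup A] (g : A) (c : ℕ)
    (γ : ℕ → A ⧸ AddSubgroup.zmultiples g) (t : ℕ) : A :=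
  (γ t).out + (t / c) • g

variable {A : Type*} [AddCommGroup A] {g : A} {c : ℕ}

theorem mk_liftOrdering (γ : ℕ → A ⧸ AddSubgroup.zmultiples g) (t : ℕ) :
    ((liftOrdering g c γ t : A) : A ⧸ AddSubgroup.zmultiples g) = γ t := by
  simp [liftOrdering]

theorem isHarmoniousOrdering_liftOrdering {γ : ℕ → A ⧸ AddSubgroup.zmultiples g}
    (hγ : IsHarmoniousOrdering c γ) (hg : Odd (addOrderOf g)) :
    IsHarmoniousOrdering (c * addOrderOf g) (liftOrdering g c γ) := by
  refine ⟨injectiveMod_mul_of_div_modEq (fun s t hst => ?_) (fun s t hst => ?_),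
    injectiveMod_mul_of_div_modEq (fun s t hst => ?_) (fun s t hst => ?_)⟩
  · rw [← hγ.1, ← mk_liftOrdering γ s, ← mk_liftOrdering γ t, hst]
  · rw [← nsmul_eq_nsmul_iff_modEq, liftOrdering, liftOrdering, (hγ.1 s t).2 hst, add_right_inj]
  · rw [← hγ.2]
    simpa only [mk_add, mk_liftOrdering] using congrArg (mk (s := AddSubgroup.zmultiples g)) hst
  · have hε : (if c ∣ s + 1 then 1 else 0) = if c ∣ t + 1 then 1 else 0 := by
      simp only [(hst.add_right 1).dvd_iff dvd_rfl]
    have hsum : ∀ u, liftOrdering g c γ u + liftOrdering g c γ (u + 1) =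
        (γ u).out + (γ (u + 1)).out + (2 * (u / c) + if c ∣ u + 1 then 1 else 0) • g := by
      intro u
      rw [liftOrdering, liftOrdering, Nat.succ_div, two_mul, add_assoc, add_nsmul, add_nsmul,
        add_nsmul]
      abel
    rw [hsum, hsum, (hγ.1 s t).2 hst, (hγ.1 (s + 1) (t + 1)).2 (hst.add_right 1), hε,
      add_right_inj, nsmul_eq_nsmul_iff_modEq, Nat.two_mul_add_modEq_iff hg]

end lift

theorem exists_isHarmoniousOrdering (A : Type*) [AddCommGroup A] [Finite A]
    (hA : Odd (Nat.card A)) : ∃ p : ℕ → A, IsHarmoniousOrdering (Nat.card A) p := by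
  induction hn : Nat.card A using Nat.strong_induction_on generalizing A with
  | _ n ih =>
  subst hn
  rcases subsingleton_or_nontrivial A with _ | _
  · exact ⟨0, fun _ _ => by simp [Nat.card_unique, Nat.modEq_one],
      fun _ _ => by simp [Nat.card_unique, Nat.modEq_one]⟩
  obtain ⟨g, hg⟩ := exists_ne (0 : A)
  have hcard := AddSubgroup.card_eq_card_quotient_mul_card_addSubgroup (AddSubgroup.zmultiples g)
  rw [Nat.card_zmultiples] at hcard
  have hodd := hcard ▸ hA
  have hlt : Nat.card (A ⧸ AddSubgroup.zmultiples g) < Nat.card A := by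
    rw [hcard]
    exact lt_mul_of_one_lt_right Nat.card_pos <|
      lt_of_le_of_ne (addOrderOf_pos g) (by simpa [eq_comm] using hg)
  obtain ⟨γ, hγ⟩ := ih _ hlt _ (Nat.odd_mul.1 hodd).1 rfl
  exact ⟨_, hcard ▸ isHarmoniousOrdering_liftOrdering hγ (Nat.odd_mul.1 hodd).2⟩

section balance

variable {ι A : Type*}

def IsBalanced (f : ι → A) : Prop :=
  ∀ a b, {i | f i = a}.ncard ≤ {i | f i = b}.ncard + 1

theorem ncard_fiber_eq_count [Fintype ι] [DecidableEq A] (f : ι → A) (a : A) :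
    {i | f i = a}.ncard = (Finset.univ.val.map f).count a := by
  rw [Set.ncard_eq_toFinset_card', Multiset.count_map]
  simp [Finset.card, Finset.filter_val, eq_comm]

theorem IsBalanced.of_map_univ_eq_nsmul_add [Fintype ι] [Fintype A] {f : ι → A} {m : ℕ}
    {s : Multiset A} (hs : s.Nodup) (hf : Finset.univ.val.map f = m • Finset.univ.val + s) :
    IsBalanced f := by
  classical
  intro a b
  have hcount : ∀ x, {i | f i = x}.ncard = m + s.count x := fun x => by
    rw [ncard_fiber_eq_count, hf, Multiset.count_add, Multiset.count_nsmul,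
      Multiset.count_univ, mul_one]
  rw [hcount, hcount]
  have := Multiset.nodup_iff_count_le_one.1 hs a
  omega

end balance

namespace InjectiveMod

variable {α β : Type*} {k : ℕ} {f : ℕ → α}

theorem comp {g : α → β} (hf : InjectiveMod k f) (hg : Function.Injective g) :
    InjectiveMod k (g ∘ f) :=
  fun s t => hg.eq_iff.trans (hf s t)

theorem nodup_map_range (hf : InjectiveMod k f) {r : ℕ} (hr : r ≤ k) :
    ((Multiset.range r).map f).Nodup :=
  (Multiset.nodup_range r).map_on fun s hs t ht hst => ((hf s t).1 hst).eq_of_lt_of_lt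
    ((Multiset.mem_range.1 hs).trans_le hr) ((Multiset.mem_range.1 ht).trans_le hr)

theorem map_range_mul [Fintype α] (hf : InjectiveMod k f) (hk : Fintype.card α = k) (m : ℕ) :
    (Multiset.range (m * k)).map f = m • Finset.univ.val := by
  have hperiod : (Multiset.range k).map f = Finset.univ.val :=
    congrArg Finset.val (Finset.eq_univ_of_card ⟨_, hf.nodup_map_range le_rfl⟩ (by simp [hk]))
  induction m with
  | zero => simp
  | succ m ih =>
    rw [add_mul, one_mul, Multiset.range_add, Multiset.map_add, ih, Multiset.map_map, succ_nsmul,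
      ← hperiod]
    congr 1
    exact Multiset.map_congr rfl fun t _ => (hf _ _).2 (by simp [Nat.ModEq])

end InjectiveMod

namespace SimpleGraph

variable {n : ℕ} [NeZero n]

theorem cycleGraph_edgeSet_eq_range (hn : 2 ≤ n) :
    (cycleGraph n).edgeSet = Set.range fun i : Fin n => s(i, i + 1) := by
  obtain ⟨n, rfl⟩ : ∃ n', n = n' + 2 := ⟨n - 2, by omega⟩
  ext e
  induction e using Sym2.ind with
  | _ u v =>
    simp only [mem_edgeSet, cycleGraph_adj, sub_eq_iff_eq_add', Set.mem_range, Sym2.eq_iff]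
    rw [exists_or, exists_eq_left, exists_eq_left, eq_comm (a := u), eq_comm (a := v), or_comm]

theorem injective_sym2_mk_self_add_one (hn : 3 ≤ n) :
    Function.Injective fun i : Fin n => s(i, i + 1) := by
  obtain ⟨n, rfl⟩ : ∃ n', n = n' + 3 := ⟨n - 3, by omega⟩
  intro i j hij
  rcases Sym2.eq_iff.1 hij with ⟨h, -⟩ | ⟨h1, h2⟩
  · exact h
  · have : (2 : Fin (n + 3)) = 0 := by
      rw [h1, add_assoc, add_eq_left] at h2
      exact h2
    simp [Fin.ext_iff, Nat.mod_eq_of_lt (show 2 < n + 3 by omega)] at this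

theorem isCordialLabeling_cycleGraph_iff {A : Type*} [AddCommMonoid A] (hn : 3 ≤ n)
    (c : Fin n → A) :
    IsCordialLabeling (cycleGraph n) c ↔ IsBalanced c ∧ IsBalanced fun i => c i + c (i + 1) := by
  have hfiber : ∀ a, {e ∈ (cycleGraph n).edgeSet | edgeLabel c e = a} =
      (fun i : Fin n => s(i, i + 1)) '' {i | c i + c (i + 1) = a} := fun a => by
    rw [cycleGraph_edgeSet_eq_range (by omega)]
    ext e
    constructor
    · rintro ⟨⟨i, rfl⟩, hi⟩
      exact ⟨i, hi, rfl⟩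
    · rintro ⟨i, hi, rfl⟩
      exact ⟨⟨i, rfl⟩, hi⟩
  simp only [IsCordialLabeling, IsBalanced, hfiber,
    Set.ncard_image_of_injective _ (injective_sym2_mk_self_add_one hn)]

end SimpleGraph

theorem Fin.apply_val_add_one {α : Type*} {n : ℕ} [NeZero n] {F : ℕ → α} (hF : F n = F 0)
    (i : Fin n) : F (i + 1 : Fin n) = F (i + 1) := by
  have hval : ((i + 1 : Fin n) : ℕ) = (i + 1) % n := by
    rw [Fin.val_add, Fin.val_one', Nat.add_mod_mod]
  obtain hlt | heq : (i : ℕ) + 1 < n ∨ (i : ℕ) + 1 = n := by omega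
  · rw [hval, Nat.mod_eq_of_lt hlt]
  · rw [hval, heq, Nat.mod_self, hF]

theorem Fin.univ_val_map_val {α : Type*} {n : ℕ} (F : ℕ → α) :
    (Finset.univ : Finset (Fin n)).val.map (fun i : Fin n => F i) = (Multiset.range n).map F := by
  have h := congrArg Finset.val (Fin.map_valEmbedding_univ (n := n))
  rw [Finset.map_val, Nat.Iio_eq_range, Finset.range_val] at h
  rw [← h, Multiset.map_map]
  rfl

theorem Multiset.range_two_mul (r : ℕ) :
    range (2 * r) = (range r).map (2 * ·) + (range r).map (2 * · + 1) := by
  induction r with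
  | zero => rfl
  | succ r ih =>
    rw [show 2 * (r + 1) = 2 * r + 1 + 1 by ring, range_succ, range_succ, ih, range_succ]
    simp only [map_cons, cons_add, add_cons]

theorem Multiset.map_range_two_mul_add {α : Type*} (F : ℕ → α) (r s : ℕ) :
    (range (2 * r + s)).map F = (range r).map (fun j => F (2 * j)) +
      (range r).map (fun j => F (2 * j + 1)) + (range s).map (fun y => F (2 * r + y)) := by
  simp only [range_add, range_two_mul, map_add, map_map, Function.comp_def]

section stutter

variable {α : Type*} (p : ℕ → α) (r : ℕ)

def stutter (x : ℕ) : α :=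
  if x < 2 * r then p (x / 2) else p (x - r)

variable {p r}

theorem stutter_two_mul {j : ℕ} (hj : j ≤ r) : stutter p r (2 * j) = p j := by
  unfold stutter
  split_ifs <;> congr 1 <;> omega

theorem stutter_two_mul_add_one {j : ℕ} (hj : j < r) : stutter p r (2 * j + 1) = p j := by
  unfold stutter
  split_ifs <;> congr 1 <;> omega

theorem stutter_two_mul_add (y : ℕ) : stutter p r (2 * r + y) = p (r + y) := by
  unfold stutter
  split_ifs <;> congr 1 <;> omega

theorem map_range_stutter (s : ℕ) :
    (Multiset.range (2 * r + s)).map (stutter p r) =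
      (Multiset.range r).map p + (Multiset.range (r + s)).map p := by
  rw [Multiset.map_range_two_mul_add, Multiset.range_add, Multiset.map_add, Multiset.map_map,
    ← add_assoc]
  congr 2
  · exact Multiset.map_congr rfl fun j hj => stutter_two_mul (Multiset.mem_range.1 hj).le
  · exact Multiset.map_congr rfl fun j hj => stutter_two_mul_add_one (Multiset.mem_range.1 hj)
  · simp only [stutter_two_mul_add, Function.comp_def]

theorem map_range_stutter_add_stutter_succ [Add α] (s : ℕ) :
    (Multiset.range (2 * r + s)).map (fun x => stutter p r x + stutter p r (x + 1)) =
      (Multiset.range r).map (fun j => p j + p j) +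
        (Multiset.range (r + s)).map (fun t => p t + p (t + 1)) := by
  rw [Multiset.map_range_two_mul_add, Multiset.range_add, Multiset.map_add, Multiset.map_map,
    ← add_assoc]
  congr 2
  · refine Multiset.map_congr rfl fun j hj => ?_
    rw [stutter_two_mul_add_one (Multiset.mem_range.1 hj),
      stutter_two_mul (Multiset.mem_range.1 hj).le]
  · refine Multiset.map_congr rfl fun j hj => ?_
    rw [stutter_two_mul_add_one (Multiset.mem_range.1 hj),
      show 2 * j + 1 + 1 = 2 * (j + 1) by ring, stutter_two_mul (Multiset.mem_range.1 hj)]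
  · simp only [add_assoc, stutter_two_mul_add, Function.comp_def]

end stutter

theorem IsHarmoniousOrdering.isCordial_cycleGraph {A : Type*} [AddCommGroup A] [Fintype A]
    {k : ℕ} {p : ℕ → A} (hp : IsHarmoniousOrdering k p) (hk : Fintype.card A = k) (hodd : Odd k)
    {m r : ℕ} (hrk : r ≤ k) (hrm : r ≤ m * k) (hn : 3 ≤ m * k + r) :
    IsCordial A (cycleGraph (m * k + r)) := by
  classical
  obtain ⟨s, hs⟩ := Nat.exists_eq_add_of_le hrm
  have hlen : m * k + r = 2 * r + s := by omega
  have : NeZero (m * k + r) := ⟨by omega⟩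
  have hwrap : stutter p r (m * k + r) = stutter p r 0 := by
    rw [hlen, stutter_two_mul_add, ← hs]
    simpa [stutter] using (hp.1 _ 0).2 (by simp [Nat.ModEq])
  have hdouble : InjectiveMod k fun j => p j + p j := by
    have h2 : (Nat.card A).Coprime 2 := by
      rwa [Nat.card_eq_fintype_card, hk, Nat.coprime_two_right]
    simpa only [Function.comp_def, two_nsmul] using hp.1.comp h2.nsmul_right_bijective.injective
  refine ⟨fun i => stutter p r i, (isCordialLabeling_cycleGraph_iff hn _).2 ⟨?_, ?_⟩⟩
  · refine .of_map_univ_eq_nsmul_add (m := m) (hp.1.nodup_map_range hrk) ?_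
    rw [Fin.univ_val_map_val, hlen, map_range_stutter, ← hs, hp.1.map_range_mul hk, add_comm]
  · refine .of_map_univ_eq_nsmul_add (m := m) (hdouble.nodup_map_range hrk) ?_
    simp only [Fin.apply_val_add_one hwrap]
    rw [Fin.univ_val_map_val (fun x => stutter p r x + stutter p r (x + 1)), hlen,
      map_range_stutter_add_stutter_succ, ← hs, hp.2.map_range_mul hk, add_comm]

/-- If `A` is a finite abelian group of odd order `k ≥ 3`, then the cycle `C_{mk+r}` is
`A`-cordial for every `m ≥ 1` and `0 ≤ r ≤ k - 1`. -/
theorem cycle_cordial_of_odd_order_long (A : Type*) [AddCommGroup A] [Fintype A]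
    (k : ℕ) (hcard : Fintype.card A = k) (hodd : Odd k) (hk : 3 ≤ k)
    (m r : ℕ) (hm : 1 ≤ m) (hr : r ≤ k - 1) :
    IsCordial A (cycleGraph (m * k + r)) := by
  obtain ⟨p, hp⟩ := exists_isHarmoniousOrdering A (by rwa [Nat.card_eq_fintype_card, hcard])
  rw [Nat.card_eq_fintype_card, hcard] at hp
  have hkm : k ≤ m * k := Nat.le_mul_of_pos_left k hm
  exact hp.isCordial_cycleGraph hcard hodd (by omega) (by omega) (by omega)
end

section
/- Let A and B be finite abelian groups of orders m and n respectively, each containing more than one element of order 2. Suppose the cycle C_m is A-cordial and the cycle C_n is B-cordial. Then the disjoint union of two cycles of length mn/2 is (A × B)-cordial. (Note that m is even since A has an element of order 2, so mn/2 is an integer; assume mn/2 ≥ 3.) -/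
open SimpleGraph

/-- The disjoint union of `n` copies of a graph `G`, one copy for each element of `Fin n`. -/
def disjointCopies {V : Type*} (n : ℕ) (G : SimpleGraph V) : SimpleGraph (Fin n × V) where
  Adj x y := x.1 = y.1 ∧ G.Adj x.2 y.2
  symm := ⟨fun _ _ ⟨h1, h2⟩ => ⟨h1.symm, h2.symm⟩⟩
  loopless := ⟨fun x hx => G.loopless.irrefl x.2 hx.2⟩

/-!
An `A`-cordial labeling of `C_m` with `|A| = m` is a bijection `f : ℤ/m → A` whose sums
`f i + f (i + 1)` are again pairwise distinct; likewise `g : ℤ/n → B`. Since `A` and `B`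
contain involutions, `m = 2M` and `n` are even. Label the vertices of `2C_{Mn}` by `(f x, g y)`
where `(x, y)` walks on the torus `ℤ/2M × ℤ/n`, changing `x` by `±1` and increasing `y` by `1`
at every edge; an edge then gets the label `(f x + f (x + 1), g y + g (y + 1))` with `x` the
lower of its two rows. Cut each cycle into blocks of `n` vertices: in block `w` of copy `r` the
row climbs from `r + 2w` to `r + 2w + n/2 + 1` and comes back down to `r + 2w + 3`, so the next
block starts two rows higher. In each column the rows of the vertices, and the lower rows of
the edges, are shifts of `r + 2w`, which runs exactly once through `ℤ/2M`; so vertex and edge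
labels are bijective.
-/

open Function Fin.NatCast

section Balanced

variable {W A : Type*}

lemma bijective_of_ncard_fiber_le_succ [Fintype W] [Fintype A]
    (hcard : Fintype.card W = Fintype.card A) {T : W → A}
    (hT : ∀ a b, {w | T w = a}.ncard ≤ {w | T w = b}.ncard + 1) : Bijective T := by
  rw [Fintype.bijective_iff_surjective_and_card]
  refine ⟨fun x => ?_, hcard⟩
  by_contra hx
  have hempty : {w | T w = x}.ncard = 0 := by
    rw [Set.ncard_eq_zero, Set.eq_empty_iff_forall_notMem]
    exact fun w hw => hx ⟨w, hw⟩
  -- a missing label forces every label class to have at most one element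
  have hinj : Injective T := fun w w' h =>
    (Set.ncard_le_one (s := {v | T v = T w})).mp (by have := hT (T w) x; omega) w rfl w' h.symm
  exact hx (((Fintype.bijective_iff_injective_and_card T).mpr ⟨hinj, hcard⟩).2 x)

lemma ncard_fiber_eq_one {T : W → A} (hT : Bijective T) (a : A) :
    {w | T w = a}.ncard = 1 :=
  (Set.ncard_preimage_of_injective_subset_range hT.1 (s := {a}) (by simp [hT.2.range_eq])).trans
    (Set.ncard_singleton a)

end Balanced

section Cordial

variable {V ι A : Type*} [AddCommMonoid A] {G : SimpleGraph V} {ε : ι → Sym2 V}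

lemma ncard_edgeLabel_fiber (hε : Injective ε) (hrange : G.edgeSet = Set.range ε)
    (c : V → A) (a : A) :
    {e ∈ G.edgeSet | edgeLabel c e = a}.ncard = {i | edgeLabel c (ε i) = a}.ncard := by
  rw [← Set.ncard_preimage_of_injective_subset_range hε (fun e he => hrange ▸ he.1)]
  congr 1
  ext i
  simp [hrange]

lemma IsCordialLabeling.bijective [Fintype V] [Fintype ι] [Fintype A]
    (hV : Fintype.card V = Fintype.card A) (hι : Fintype.card ι = Fintype.card A)
    (hε : Injective ε) (hrange : G.edgeSet = Set.range ε) {c : V → A}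
    (hc : IsCordialLabeling G c) : Bijective c ∧ Bijective fun i => edgeLabel c (ε i) := by
  refine ⟨bijective_of_ncard_fiber_le_succ hV hc.1, bijective_of_ncard_fiber_le_succ hι ?_⟩
  intro a b
  simpa only [ncard_edgeLabel_fiber hε hrange] using hc.2 a b

lemma isCordialLabeling_of_bijective (hε : Injective ε) (hrange : G.edgeSet = Set.range ε)
    {c : V → A} (hc : Bijective c) (hce : Bijective fun i => edgeLabel c (ε i)) :
    IsCordialLabeling G c := by
  refine ⟨fun a b => ?_, fun a b => ?_⟩
  · simp [ncard_fiber_eq_one hc]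
  · simp [ncard_edgeLabel_fiber hε hrange, ncard_fiber_eq_one hce]

end Cordial

lemma injective_cycleGraph_edge {m : ℕ} [NeZero m] (hm : 3 ≤ m) :
    Injective fun i : Fin m => s(i, i + 1) := by
  intro i j hij
  rcases Sym2.eq_iff.mp hij with ⟨h, -⟩ | ⟨h, h'⟩
  · exact h
  · have h2 : (1 + 1 : Fin m) = 0 := by
      rw [h, add_assoc] at h'
      simpa using h'.symm
    obtain ⟨k, rfl⟩ : ∃ k, m = k + 3 := ⟨m - 3, by omega⟩
    simp [Fin.ext_iff, Fin.val_add, Nat.mod_eq_of_lt (show 2 < k + 3 by omega)] at h2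

lemma cycleGraph_edgeSet_eq_range {m : ℕ} [NeZero m] (hm : 3 ≤ m) :
    (cycleGraph m).edgeSet = Set.range fun i : Fin m => s(i, i + 1) := by
  obtain ⟨k, rfl⟩ : ∃ k, m = k + 2 := ⟨m - 2, by omega⟩
  ext e
  induction e with
  | _ u v =>
    simp only [mem_edgeSet, cycleGraph_adj, Set.mem_range, Sym2.eq_iff, sub_eq_iff_eq_add]
    constructor
    · rintro (h | h)
      · exact ⟨v, Or.inr ⟨rfl, (h.trans (add_comm _ _)).symm⟩⟩
      · exact ⟨u, Or.inl ⟨rfl, (h.trans (add_comm _ _)).symm⟩⟩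
    · rintro ⟨i, ⟨rfl, rfl⟩ | ⟨rfl, rfl⟩⟩
      · exact Or.inr (add_comm _ _)
      · exact Or.inl (add_comm _ _)

lemma IsCordial.exists_bijective_cycleGraph {A : Type*} [AddCommMonoid A] [Fintype A] {m : ℕ}
    [NeZero m] (hm : 3 ≤ m) (hA : Fintype.card A = m) (h : IsCordial A (cycleGraph m)) :
    ∃ f : Fin m → A, Bijective f ∧ Bijective fun i => f i + f (i + 1) := by
  obtain ⟨c, hc⟩ := h
  exact ⟨c, hc.bijective (by simp [hA]) (by simp [hA]) (injective_cycleGraph_edge hm)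
    (cycleGraph_edgeSet_eq_range hm)⟩

section disjointCopies

variable {V ι : Type*} {n : ℕ} {G : SimpleGraph V} {ε : ι → Sym2 V}

lemma injective_disjointCopies_edge (hε : Injective ε) :
    Injective fun p : Fin n × ι => Sym2.map (Prod.mk p.1) (ε p.2) := by
  rintro ⟨r, i⟩ ⟨r', i'⟩ h
  dsimp only at h
  have hmem : (r, (ε i).out.1) ∈ Sym2.map (Prod.mk r) (ε i) :=
    Sym2.mem_map.mpr ⟨_, (ε i).out_fst_mem, rfl⟩
  obtain ⟨v, -, hv⟩ := Sym2.mem_map.mp (h ▸ hmem)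
  obtain rfl : r' = r := congrArg Prod.fst hv
  simpa using hε (Sym2.map.injective (Prod.mk_right_injective _) h)

lemma disjointCopies_edgeSet_eq_range (hrange : G.edgeSet = Set.range ε) :
    (disjointCopies n G).edgeSet =
      Set.range fun p : Fin n × ι => Sym2.map (Prod.mk p.1) (ε p.2) := by
  ext e
  induction e with
  | _ u v =>
    obtain ⟨r, a⟩ := u
    obtain ⟨r', b⟩ := v
    simp only [mem_edgeSet, Set.mem_range, Prod.exists]
    constructor
    · rintro ⟨rfl, hab⟩
      obtain ⟨i, hi⟩ : s(a, b) ∈ Set.range ε := hrange ▸ hab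
      exact ⟨r, i, by rw [hi, Sym2.map_mk]⟩
    · rintro ⟨q, i, h⟩
      have he : ε i ∈ G.edgeSet := hrange ▸ ⟨i, rfl⟩
      revert h he
      induction ε i with
      | _ x y =>
        simp only [Sym2.map_mk, Sym2.eq_iff, Prod.mk.injEq]
        rintro (⟨⟨rfl, rfl⟩, rfl, rfl⟩ | ⟨⟨rfl, rfl⟩, rfl, rfl⟩) hxy
        · exact ⟨rfl, hxy⟩
        · exact ⟨rfl, hxy.symm⟩

end disjointCopies

-- Vertex `k` of copy `r` lies in row `torusRow n D r k` of the `2M × n` torus: each copy is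
-- cut into blocks of `n` vertices, block `w` starts in row `r + 2 * w`, and column `j` is
-- lifted by `D j`.
def torusRow (n : ℕ) (D : ℕ → ℕ) (r k : ℕ) : ℕ := r + 2 * (k / n) + D (k % n)

-- The heights `0, 1, …, n / 2 + 1, n / 2, …, 3`: the last one sits just above the start of the
-- next block, two rows higher.
def zigzagHeight (n j : ℕ) : ℕ := min j (n + 2 - j)

-- Height, relative to the current block, of the lower end of the edge from column `j`
-- to column `j + 1`.
def zigzagBase (n j : ℕ) : ℕ := if j ≤ n / 2 then zigzagHeight n j else zigzagHeight n j - 1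

lemma torusRow_add_mul {n : ℕ} (hn : 0 < n) (D : ℕ → ℕ) (r k q : ℕ) :
    torusRow n D r (k + n * q) = torusRow n D r k + 2 * q := by
  simp only [torusRow, Nat.add_mul_div_left _ _ hn, Nat.add_mul_mod_self_left]
  ring

lemma torusRow_zigzag_succ {n : ℕ} (hn : Even n) (hn0 : 0 < n) (r k : ℕ) :
    s(torusRow n (zigzagHeight n) r k, torusRow n (zigzagHeight n) r (k + 1)) =
      s(torusRow n (zigzagBase n) r k, torusRow n (zigzagBase n) r k + 1) := by
  obtain ⟨t, rfl⟩ := hn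
  obtain ⟨j, w, hj, rfl⟩ : ∃ j w, j < t + t ∧ k = j + (t + t) * w :=
    ⟨k % (t + t), k / (t + t), Nat.mod_lt _ hn0, (Nat.mod_add_div k _).symm⟩
  rw [add_right_comm, torusRow_add_mul hn0, torusRow_add_mul hn0, torusRow_add_mul hn0]
  rcases Nat.lt_or_ge (j + 1) (t + t) with hj1 | hj1
  · simp only [torusRow, zigzagBase, zigzagHeight, Nat.div_eq_of_lt hj, Nat.div_eq_of_lt hj1,
      Nat.mod_eq_of_lt hj, Nat.mod_eq_of_lt hj1, Sym2.eq_iff]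
    split_ifs <;> omega
  · rw [show j + 1 = t + t by omega]
    simp only [torusRow, zigzagBase, zigzagHeight, Nat.div_eq_of_lt hj, Nat.div_self hn0,
      Nat.mod_eq_of_lt hj, Nat.mod_self, Sym2.eq_iff]
    split_ifs <;> omega

section torus

variable {M n : ℕ} [NeZero M] [NeZero n]

lemma natCast_torusRow_mod (D : ℕ → ℕ) (r k : ℕ) :
    ((torusRow n D r (k % (M * n)) : ℕ) : Fin (2 * M)) = (torusRow n D r k : Fin (2 * M)) := by
  have hk : torusRow n D r k = torusRow n D r (k % (M * n)) + 2 * M * (k / (M * n)) := by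
    have := torusRow_add_mul (Nat.pos_of_neZero n) D r (k % (M * n)) (M * (k / (M * n)))
    rwa [← mul_assoc, mul_comm n M, Nat.mod_add_div, ← mul_assoc] at this
  simp [hk, Fin.ext_iff, Fin.val_natCast]

variable (M n) in
def torusCoord (D : ℕ → ℕ) (p : Fin 2 × Fin (M * n)) : Fin (2 * M) × Fin n :=
  ((torusRow n D p.1 p.2 : ℕ), (p.2 : ℕ))

lemma bijective_torusCoord (D : ℕ → ℕ) : Bijective (torusCoord M n D) := by
  refine (Fintype.bijective_iff_injective_and_card _).mpr ⟨?_, by simp; ring⟩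
  rintro ⟨⟨r, hr⟩, ⟨k, hk⟩⟩ ⟨⟨r', hr'⟩, ⟨k', hk'⟩⟩ h
  simp only [torusCoord, Prod.mk.injEq, Fin.ext_iff, Fin.val_natCast, torusRow] at h ⊢
  obtain ⟨hrow, hcol⟩ := h
  rw [hcol] at hrow
  have hw : k / n < M := Nat.div_lt_of_lt_mul (mul_comm M n ▸ hk)
  have hw' : k' / n < M := Nat.div_lt_of_lt_mul (mul_comm M n ▸ hk')
  have hlayer : r + 2 * (k / n) = r' + 2 * (k' / n) :=
    (Nat.ModEq.add_right_cancel' _ hrow).eq_of_lt_of_lt (by omega) (by omega)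
  obtain ⟨rfl, hblock⟩ : r = r' ∧ k / n = k' / n := by omega
  refine ⟨rfl, ?_⟩
  rw [← Nat.mod_add_div k n, ← Nat.mod_add_div k' n, hcol, hblock]

theorem isCordial_disjointCopies_two_cycleGraph {A B : Type*} [AddCommMonoid A]
    [AddCommMonoid B] (hn : Even n) (hL : 3 ≤ M * n) {f : Fin (2 * M) → A} {g : Fin n → B}
    (hf : Bijective f) (hf' : Bijective fun i => f i + f (i + 1))
    (hg : Bijective g) (hg' : Bijective fun j => g j + g (j + 1)) :
    IsCordial (A × B) (disjointCopies 2 (cycleGraph (M * n))) := by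
  refine ⟨Prod.map f g ∘ torusCoord M n (zigzagHeight n),
    isCordialLabeling_of_bijective (injective_disjointCopies_edge (injective_cycleGraph_edge hL))
      (disjointCopies_edgeSet_eq_range (cycleGraph_edgeSet_eq_range hL))
      ((hf.prodMap hg).comp (bijective_torusCoord _)) ?_⟩
  convert (hf'.prodMap hg').comp (bijective_torusCoord (zigzagBase n)) using 1
  funext ⟨r, k⟩
  have hrows := congrArg (fun e => edgeLabel f (Sym2.map Nat.cast e))
    (torusRow_zigzag_succ hn (Nat.pos_of_neZero n) r k)
  simp only [edgeLabel, Sym2.map_mk, Sym2.lift_mk, Nat.cast_succ] at hrows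
  have hcol : (((k + 1) % (M * n) : ℕ) : Fin n) = (k : Fin n) + 1 := by
    simp [Fin.ext_iff, Fin.val_add, Fin.val_natCast, Nat.mod_mod_of_dvd _ (dvd_mul_left n M)]
  simp [torusCoord, edgeLabel, Fin.val_add, natCast_torusRow_mod, hrows, hcol]

end torus

/-- Let `A` and `B` be finite abelian groups of orders `m` and `n`, each with more than
one element of order `2`. If `C_m` is `A`-cordial and `C_n` is `B`-cordial, then two
disjoint cycles of length `mn/2` form an `(A × B)`-cordial graph. -/
theorem two_long_cycles_cordial (A B : Type*) [AddCommGroup A] [Fintype A]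
    [AddCommGroup B] [Fintype B] (m n : ℕ)
    (hA : Fintype.card A = m) (hB : Fintype.card B = n)
    (hIA : 1 < {a : A | addOrderOf a = 2}.ncard)
    (hIB : 1 < {b : B | addOrderOf b = 2}.ncard)
    (hm : 3 ≤ m) (hn : 3 ≤ n) (hmn : 3 ≤ m * n / 2)
    (hAm : IsCordial A (cycleGraph m)) (hBn : IsCordial B (cycleGraph n)) :
    IsCordial (A × B) (disjointCopies 2 (cycleGraph (m * n / 2))) := by
  obtain ⟨a, ha⟩ := Set.nonempty_of_ncard_ne_zero (s := {a : A | addOrderOf a = 2}) (by omega)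
  obtain ⟨b, hb⟩ := Set.nonempty_of_ncard_ne_zero (s := {b : B | addOrderOf b = 2}) (by omega)
  obtain ⟨M, rfl⟩ : 2 ∣ m := hA ▸ ha ▸ addOrderOf_dvd_card
  have hn2 : Even n := even_iff_two_dvd.mpr (hB ▸ hb ▸ addOrderOf_dvd_card)
  rw [Nat.mul_assoc, Nat.mul_div_cancel_left _ two_pos] at hmn ⊢
  have : NeZero M := ⟨by omega⟩
  have : NeZero n := ⟨by omega⟩
  obtain ⟨f, hf, hf'⟩ := hAm.exists_bijective_cycleGraph hm hA
  obtain ⟨g, hg, hg'⟩ := hBn.exists_bijective_cycleGraph hn hB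
  exact isCordial_disjointCopies_two_cycleGraph hn2 hmn hf hf' hg hg'
end
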